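/- arXiv:0704.2789 — 2 statements merged into one kernel-verified Lean document; each statement's English description precedes it below -/
import Mathlib

section
/- Let (ε_n)_{n≥0} be a sequence of nonnegative real numbers with ∑ ε_n = ∞. Then there exists a subset Λ ⊆ ℕ such that ∑_{n ∈ Λ} ε_n = ∞ and for all sufficiently large positive integers s there exists a positive integer m with Λ ∩ {n ∈ ℕ : n ≡ -s (mod m)} = ∅. -/
/-!
Split ℕ dyadically: at each level one of the two halves of a non-summable residue class mod `2 ^ k`
is again non-summable, which yields residues `r k` mod `2 ^ k`, compatible along `k` (a 2-adic
integer `ρ`), whose classes all carry a divergent sum. A diagonal choice of finite blocks from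
these classes gives a divergent `Λ` lying, up to finitely many elements, in every class. If
`s > 0` is not `-ρ` (this excludes at most one `s`), then `2 ^ j ∤ r j + s` for some `j`, and a
large multiple of `2 ^ j` is a modulus avoided by `Λ + s`.
-/

open Finset

lemma exists_le_sum_Ico_of_not_summable {f : ℕ → ℝ} (hf : ∀ n, 0 ≤ f n) (h : ¬Summable f)
    (a : ℕ) (c : ℝ) : ∃ b, a ≤ b ∧ c ≤ ∑ n ∈ Ico a b, f n := by
  have h' : ¬Summable fun n => f (n + a) := (summable_nat_add_iff a).not.mpr h
  obtain ⟨k, hk⟩ : ∃ k, c < ∑ i ∈ range k, f (i + a) := by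
    by_contra! hle
    exact h' (summable_of_sum_range_le (fun n => hf _) hle)
  refine ⟨a + k, by omega, ?_⟩
  rw [sum_Ico_eq_sum_range, Nat.add_sub_cancel_left]
  simpa only [add_comm a] using hk.le

theorem exists_not_summable_indicator_forall_diff_finite {f : ℕ → ℝ} (hf : ∀ n, 0 ≤ f n)
    {C : ℕ → Set ℕ} (hC : Antitone C) (h : ∀ k, ¬Summable ((C k).indicator f)) :
    ∃ Λ : Set ℕ, ¬Summable (Λ.indicator f) ∧ ∀ k, (Λ \ C k).Finite := by
  have hf' : ∀ s : Set ℕ, ∀ n, 0 ≤ s.indicator f n := fun s => Set.indicator_nonneg fun n _ => hf n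
  choose b hab hb using fun k a => exists_le_sum_Ico_of_not_summable (hf' (C k)) (h k) a 1
  set N : ℕ → ℕ := fun k => Nat.rec 0 b k
  have hN : Monotone N := monotone_nat_of_le_succ fun k => hab k (N k)
  set Λ := ⋃ k, C k ∩ Set.Ico (N k) (N (k + 1))
  refine ⟨Λ, fun hsum => ?_, fun j => (Set.finite_Iio (N j)).subset ?_⟩
  · have hblock (k : ℕ) : 1 ≤ ∑ n ∈ Ico (N k) (N (k + 1)), Λ.indicator f n := by
      refine (hb k (N k)).trans (sum_le_sum fun n hn => ?_)
      by_cases hnC : n ∈ C k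
      · have hnΛ : n ∈ Λ := Set.mem_iUnion.2 ⟨k, hnC, by simpa using hn⟩
        rw [Set.indicator_of_mem hnC, Set.indicator_of_mem hnΛ]
      · rw [Set.indicator_of_notMem hnC]
        exact hf' Λ n
    have hK (K : ℕ) : (K : ℝ) ≤ ∑ n ∈ Ico (N 0) (N K), Λ.indicator f n := by
      induction K with
      | zero => simp
      | succ K ih =>
        rw [← sum_Ico_consecutive _ (hN K.zero_le) (hN K.le_succ)]
        push_cast
        linarith [hblock K]
    obtain ⟨K, hK'⟩ := exists_nat_gt (∑' n, Λ.indicator f n)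
    exact ((hK K).trans (hsum.sum_le_tsum _ fun n _ => hf' Λ n)).not_gt hK'
  · rintro n ⟨hnΛ, hnC⟩
    obtain ⟨k, hnk, -, hlt⟩ := Set.mem_iUnion.1 hnΛ
    have hkj : k < j := by
      by_contra! hjk
      exact hnC (hC hjk hnk)
    exact hlt.trans_le (hN hkj)

lemma setOf_mod_eq_eq_union {M a : ℕ} (ha : a < M) :
    {n | n % M = a} = {n | n % (M * 2) = a} ∪ {n | n % (M * 2) = a + M} := by
  ext n
  simp only [Set.mem_ofPred_eq, Set.mem_union, Nat.mod_mul]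
  have := Nat.mod_lt n (a.zero_le.trans_lt ha)
  rcases Nat.mod_two_eq_zero_or_one (n / M) with h | h <;> simp only [h] <;> omega

lemma not_summable_indicator_union {f : ℕ → ℝ} {s t : Set ℕ} (hst : Disjoint s t)
    (h : ¬Summable ((s ∪ t).indicator f)) :
    ¬Summable (s.indicator f) ∨ ¬Summable (t.indicator f) := by
  by_contra! hs
  exact h (by rw [Set.indicator_union_of_disjoint hst]; exact hs.1.add hs.2)

theorem exists_two_pow_residues_not_summable {f : ℕ → ℝ} (h : ¬Summable f) :
    ∃ r : ℕ → ℕ, ∀ k, r k < 2 ^ k ∧ r (k + 1) % 2 ^ k = r k ∧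
      ¬Summable ({n | n % 2 ^ k = r k}.indicator f) := by
  classical
  let r : ℕ → ℕ := fun k => Nat.rec 0 (fun k a =>
    if Summable ({n | n % 2 ^ (k + 1) = a}.indicator f) then a + 2 ^ k else a) k
  have hr (k : ℕ) : r (k + 1) =
      if Summable ({n | n % 2 ^ (k + 1) = r k}.indicator f) then r k + 2 ^ k else r k := rfl
  have key (k : ℕ) : r k < 2 ^ k ∧ ¬Summable ({n | n % 2 ^ k = r k}.indicator f) := by
    induction k with
    | zero => simpa [r, Nat.mod_one] using h
    | succ k ih =>
      obtain ⟨hlt, hns⟩ := ih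
      have hpow : 2 ^ (k + 1) = 2 ^ k * 2 := pow_succ 2 k
      rw [setOf_mod_eq_eq_union hlt, ← hpow] at hns
      have hdisj : Disjoint {n | n % 2 ^ (k + 1) = r k} {n | n % 2 ^ (k + 1) = r k + 2 ^ k} :=
        Set.disjoint_left.2 fun n h₁ h₂ => by simp_all
      rw [hr]
      split_ifs with hA
      · exact ⟨by omega, (not_summable_indicator_union hdisj hns).resolve_left (not_not.2 hA)⟩
      · exact ⟨by omega, hA⟩
  refine ⟨r, fun k => ⟨(key k).1, ?_, (key k).2⟩⟩
  rw [hr]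
  split_ifs <;> simp [Nat.mod_eq_of_lt (key k).1]

lemma subsingleton_setOf_forall_two_pow_dvd_add (r : ℕ → ℕ) :
    {s : ℕ | ∀ j, 2 ^ j ∣ r j + s}.Subsingleton := by
  intro s hs s' hs'
  have hdvd (j : ℕ) : (2 ^ j : ℤ) ∣ (s : ℤ) - s' := by
    have h := dvd_sub (Int.natCast_dvd_natCast.2 (hs j)) (Int.natCast_dvd_natCast.2 (hs' j))
    push_cast at h
    simpa using h
  have hlt : |(s : ℤ) - s'| < 2 ^ ((s : ℤ) - s').natAbs := by
    rw [Int.abs_eq_natAbs]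
    exact_mod_cast Nat.lt_two_pow_self
  have := Int.eq_zero_of_abs_lt_dvd (hdvd _) hlt
  omega

/-- Finitely many exceptions to `¬ M ∣ n + s` are absorbed by passing to a large multiple of `M`. -/
lemma exists_pos_forall_not_dvd_add {Λ A : Set ℕ} {M s : ℕ} (hM : 0 < M) (hs : 0 < s)
    (hA : ∀ n ∈ A, ¬M ∣ n + s) (hfin : (Λ \ A).Finite) :
    ∃ m, 0 < m ∧ ∀ n ∈ Λ, ¬m ∣ n + s := by
  obtain ⟨B, hB⟩ := hfin.bddAbove
  refine ⟨M * (B + s + 1), by positivity, fun n hn hdvd => ?_⟩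
  by_cases hnA : n ∈ A
  · exact hA n hnA (dvd_of_mul_right_dvd hdvd)
  · have hnB : n ≤ B := hB ⟨hn, hnA⟩
    exact Nat.not_dvd_of_pos_of_lt (by omega) (by nlinarith) hdvd

lemma natCast_modEq_neg_natCast_iff_dvd {m n s : ℕ} :
    (n : ℤ) ≡ -(s : ℤ) [ZMOD m] ↔ m ∣ n + s := by
  rw [Int.modEq_iff_dvd, show -(s : ℤ) - n = -((n + s : ℕ) : ℤ) by push_cast; ring, dvd_neg,
    Int.natCast_dvd_natCast]

/-- From a divergent series of nonnegative reals one can extract a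
subset `Λ ⊆ ℕ` retaining divergence, such that for all sufficiently large
positive integers `s` there is a positive integer `m` with
`Λ ∩ {n : n ≡ -s (mod m)} = ∅` (the R-set condition). -/
theorem stmt_0 (ε : ℕ → ℝ) (hnonneg : ∀ n, 0 ≤ ε n)
    (hdiv : ¬ Summable ε) :
    ∃ Λ : Set ℕ,
      (¬ Summable (Λ.indicator ε)) ∧
      (∃ S : ℕ, ∀ s : ℕ, S ≤ s → 0 < s →
        ∃ m : ℕ, 0 < m ∧ ∀ n ∈ Λ, ¬ ((n : ℤ) ≡ -(s : ℤ) [ZMOD (m : ℤ)])) := by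
  obtain ⟨r, hr⟩ := exists_two_pow_residues_not_summable hdiv
  set C : ℕ → Set ℕ := fun k => {n | n % 2 ^ k = r k}
  have hC : Antitone C := antitone_nat_of_succ_le fun k n (hn : n % 2 ^ (k + 1) = r (k + 1)) =>
    show n % 2 ^ k = r k by
      rw [← Nat.mod_mod_of_dvd n (pow_dvd_pow 2 k.le_succ), hn, (hr k).2.1]
  obtain ⟨Λ, hΛ, hfin⟩ :=
    exists_not_summable_indicator_forall_diff_finite hnonneg hC fun k => (hr k).2.2
  obtain ⟨S, hS⟩ := (subsingleton_setOf_forall_two_pow_dvd_add r).finite.bddAbove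
  refine ⟨Λ, hΛ, S + 1, fun s hSs hs => ?_⟩
  obtain ⟨j, hj⟩ : ∃ j, ¬2 ^ j ∣ r j + s := by
    by_contra! h
    have := hS h
    omega
  have hCj : ∀ n ∈ C j, ¬2 ^ j ∣ n + s := fun n (hn : n % 2 ^ j = r j) hdvd => hj <| by
    rwa [Nat.dvd_iff_mod_eq_zero, ← hn, Nat.mod_add_mod, ← Nat.dvd_iff_mod_eq_zero]
  obtain ⟨m, hm, hmΛ⟩ := exists_pos_forall_not_dvd_add (pow_pos two_pos j) hs hCj (hfin j)
  exact ⟨m, hm, fun n hn h => hmΛ n hn (natCast_modEq_neg_natCast_iff_dvd.1 h)⟩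
end

section
/- A rational function f whose Taylor spectrum {n : the n-th Taylor coefficient at 0 is nonzero} is contained in a set Λ ⊆ ℕ satisfying: for all sufficiently large s there exists m ≥ 1 with Λ ∩ {n ≡ -s (mod m)} = ∅, must be a polynomial. -/
/-!
Let `P` be the reversed denominator: `c` eventually satisfies the linear recurrence with
characteristic polynomial `P`, whose roots are nonzero. Take `D > 0` killing every root of unity
of the form `a / b` with `a, b` roots of `P`. For a residue `v mod D`, pick a large `s ≡ -v mod D`;
the hypothesis gives `m` such that `c` vanishes on `-s + mℕ`. For `g = gcd m D`, a ratio of roots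
with `m`-th power `1` also has `g`-th power `1`, which is exactly what Hermite interpolation at the
roots of `P` needs to produce `h` with `X ^ g ≡ h (X ^ m) mod P`. Applying the recurrence operator
of `X ^ (g t) - h (X ^ m) ^ t` to `c` at a large `n₀ ≡ -s mod m` expresses `c (n₀ + g t)` through
the values of `c` on `n₀ + mℕ`, which vanish; hence `c` vanishes eventually on `v + Dℕ`.
No appeal to the Skolem–Mahler–Lech theorem is needed.
-/

open Polynomial Filter

theorem Finset.exists_pos_forall_pow_eq_one {G : Type*} [Monoid G] (s : Finset G) :
    ∃ D, 0 < D ∧ ∀ x ∈ s, IsOfFinOrder x → x ^ D = 1 := by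
  classical
  refine ⟨∏ x ∈ s with IsOfFinOrder x, orderOf x,
    Finset.prod_pos fun x hx => (Finset.mem_filter.1 hx).2.orderOf_pos, fun x hx hx' => ?_⟩
  exact orderOf_dvd_iff_pow_eq_one.1 (Finset.dvd_prod_of_mem _ (Finset.mem_filter.2 ⟨hx, hx'⟩))

section PolynomialDivisibility

variable {K : Type*} [Field K]

theorem exists_X_sub_C_pow_dvd_sub_comp_X_pow [CharZero K] {a : K} (ha : a ≠ 0) {m : ℕ}
    (hm : m ≠ 0) (F : K[X]) (k : ℕ) : ∃ ψ : K[X], (X - C a) ^ k ∣ F - ψ.comp (X ^ m) := by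
  induction k with
  | zero => exact ⟨0, by simp⟩
  | succ k ih =>
    obtain ⟨ψ, G, hG⟩ := ih
    set B : K[X] := ∑ i ∈ Finset.range m, X ^ i * C a ^ (m - 1 - i)
    have hB : B * (X - C a) = X ^ m - C (a ^ m) := by rw [geom_sum₂_mul, C_pow]
    have hBa : B.eval a ≠ 0 := by
      simp only [B, eval_finsetSum, eval_mul, eval_pow, eval_X, eval_C, geom_sum₂_self]
      exact mul_ne_zero (Nat.cast_ne_zero.2 hm) (pow_ne_zero _ ha)
    -- `X ^ m - a ^ m` has a simple root at `a`, so a multiple of its `k`-th power corrects the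
    -- value of `G` at `a`.
    set e := G.eval a / B.eval a ^ k
    refine ⟨ψ + C e * (X - C (a ^ m)) ^ k, ?_⟩
    have hsplit : F - (ψ + C e * (X - C (a ^ m)) ^ k).comp (X ^ m) =
        (X - C a) ^ k * (G - C e * B ^ k) := by
      simp only [add_comp, mul_comp, C_comp, pow_comp, sub_comp, X_comp]
      rw [← hB, mul_pow]
      linear_combination hG
    rw [hsplit, pow_succ]
    refine mul_dvd_mul_left _ (dvd_iff_isRoot.2 ?_)
    simp [e, hBa]

theorem X_sub_C_pow_dvd_of_comp_C_mul_X_eq {ω a : K} {k : ℕ} {P : K[X]}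
    (hP : P.comp (C ω * X) = P) (h : (X - C (ω * a)) ^ k ∣ P) : (X - C a) ^ k ∣ P := by
  have h' := map_dvd (compRingHom (C ω * X)) h
  rw [coe_compRingHom_apply, coe_compRingHom_apply, hP, pow_comp, sub_comp, X_comp, C_comp,
    C_mul, ← mul_sub, mul_pow] at h'
  exact (dvd_mul_left _ _).trans h'

theorem X_sub_C_pow_dvd_comp_X_pow {a : K} {k m : ℕ} {f : K[X]} (h : (X - C (a ^ m)) ^ k ∣ f) :
    (X - C a) ^ k ∣ f.comp (X ^ m) := by
  have h' := map_dvd (compRingHom (X ^ m)) h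
  rw [coe_compRingHom_apply, coe_compRingHom_apply, pow_comp, sub_comp, X_comp, C_comp] at h'
  refine (pow_dvd_pow_of_dvd (dvd_iff_isRoot.2 ?_) k).trans h'
  simp

theorem exists_forall_X_sub_C_pow_dvd_sub (s : Finset K) (k : ℕ) (Φ : K → K[X]) :
    ∃ h : K[X], ∀ μ ∈ s, (X - C μ) ^ k ∣ h - Φ μ := by
  obtain ⟨h, hh⟩ := Ideal.exists_forall_sub_mem_ideal
    (I := fun μ : s => Ideal.span {(X - C (μ : K)) ^ k}) (fun μ ν hμν => by
      rw [Function.onFun, Ideal.isCoprime_span_singleton_iff]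
      exact (isCoprime_X_sub_C_of_isUnit_sub
        (sub_ne_zero.2 (Subtype.coe_ne_coe.2 hμν)).isUnit).pow) (fun μ => Φ μ)
  exact ⟨h, fun μ hμ => Ideal.mem_span_singleton.1 (hh ⟨μ, hμ⟩)⟩

theorem dvd_of_forall_X_sub_C_pow_natDegree_dvd [IsAlgClosed K] {R P : K[X]} (hR : R ≠ 0)
    (h : ∀ a ∈ R.roots, (X - C a) ^ R.natDegree ∣ P) : R ∣ P := by
  classical
  rcases eq_or_ne P 0 with rfl | hP
  · exact dvd_zero R
  refine (IsAlgClosed.dvd_iff_roots_le_roots hR hP).2 (Multiset.le_iff_count.2 fun a => ?_)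
  by_cases ha : a ∈ R.roots
  · rw [count_roots P]
    exact (Multiset.count_le_card _ _).trans
      (R.card_roots'.trans ((le_rootMultiplicity_iff hP).2 (h a ha)))
  · rw [Multiset.count_eq_zero_of_notMem ha]
    exact Nat.zero_le _

theorem exists_forall_X_sub_C_pow_dvd_X_pow_sub_comp [CharZero K] {a₀ : K} (ha₀ : a₀ ≠ 0)
    {m : ℕ} (hm : m ≠ 0) (g k : ℕ) :
    ∃ ψ : K[X], ∀ a : K, a ≠ 0 → a ^ m = a₀ ^ m → (a₀ / a) ^ g = 1 →
      (X - C a) ^ k ∣ X ^ g - ψ.comp (X ^ m) := by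
  obtain ⟨ψ, hψ⟩ := exists_X_sub_C_pow_dvd_sub_comp_X_pow ha₀ hm (X ^ g) k
  refine ⟨ψ, fun a ha hpow hg => X_sub_C_pow_dvd_of_comp_C_mul_X_eq (ω := a₀ / a) ?_ ?_⟩
  · have hm' : (a₀ / a) ^ m = 1 := by rw [div_pow, hpow, div_self (pow_ne_zero _ ha₀)]
    simp only [sub_comp, X_pow_comp, comp_assoc, mul_pow, ← C_pow, hg, hm', C_1, one_mul]
  · rwa [div_mul_cancel₀ _ ha]

theorem exists_dvd_X_pow_sub_comp_X_pow [IsAlgClosed K] [CharZero K] {R : K[X]}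
    (hR : R.coeff 0 ≠ 0) {m g : ℕ} (hm : m ≠ 0)
    (hg : ∀ a ∈ R.roots, ∀ b ∈ R.roots, (a / b) ^ m = 1 → (a / b) ^ g = 1) :
    ∃ h : K[X], R ∣ X ^ g - h.comp (X ^ m) := by
  classical
  have hR0 : R ≠ 0 := by rintro rfl; simp at hR
  have hroot : ∀ a ∈ R.roots, a ≠ 0 := by
    rintro a ha rfl
    exact hR (by simpa [coeff_zero_eq_eval_zero] using isRoot_of_mem_roots ha)
  have hfiber : ∀ μ ∈ R.roots.toFinset.image (· ^ m), ∃ ψ : K[X],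
      ∀ a ∈ R.roots, a ^ m = μ → (X - C a) ^ R.natDegree ∣ X ^ g - ψ.comp (X ^ m) := by
    intro μ hμ
    obtain ⟨a₀, ha₀, rfl⟩ := Finset.mem_image.1 hμ
    rw [Multiset.mem_toFinset] at ha₀
    obtain ⟨ψ, hψ⟩ :=
      exists_forall_X_sub_C_pow_dvd_X_pow_sub_comp (hroot a₀ ha₀) hm g R.natDegree
    refine ⟨ψ, fun a ha hpow => hψ a (hroot a ha) hpow (hg a₀ ha₀ a ha ?_)⟩
    rw [div_pow, hpow, div_self (pow_ne_zero _ (hroot a₀ ha₀))]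
  choose! Φ hΦ using hfiber
  -- glue the `Φ μ` by the Chinese remainder theorem in the variable `X ^ m`
  obtain ⟨h, hh⟩ :=
    exists_forall_X_sub_C_pow_dvd_sub (R.roots.toFinset.image (· ^ m)) R.natDegree Φ
  refine ⟨h, dvd_of_forall_X_sub_C_pow_natDegree_dvd hR0 fun a ha => ?_⟩
  have hmem : a ^ m ∈ R.roots.toFinset.image (· ^ m) :=
    Finset.mem_image_of_mem _ (Multiset.mem_toFinset.2 ha)
  have hlift := X_sub_C_pow_dvd_comp_X_pow (hh _ hmem)
  rw [sub_comp] at hlift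
  simpa using dvd_sub (hΦ _ hmem a ha rfl) hlift

end PolynomialDivisibility

section Shift

variable {R : Type*} [CommSemiring R]

variable (R) in
/-- `aeval (shift R) f` is the linear recurrence operator with characteristic polynomial `f`. -/
def shift : Module.End R (ℕ → R) := LinearMap.funLeft R R Nat.succ

theorem shift_pow_apply (k : ℕ) (c : ℕ → R) (n : ℕ) : (shift R ^ k) c n = c (n + k) := by
  induction k generalizing c with
  | zero => rfl
  | succ k ih => rw [pow_succ, Module.End.mul_apply, ih]; rfl

theorem aeval_shift_apply {f : R[X]} {d : ℕ} (hf : f.natDegree < d) (c : ℕ → R) (n : ℕ) :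
    aeval (shift R) f c n = ∑ i ∈ Finset.range d, f.coeff i * c (n + i) := by
  simp [aeval_eq_sum_range' hf, shift_pow_apply]

theorem aeval_shift_comp_X_pow_apply (f : R[X]) (m : ℕ) (c : ℕ → R) (n : ℕ) :
    aeval (shift R) (f.comp (X ^ m)) c n =
      ∑ i ∈ Finset.range (f.natDegree + 1), f.coeff i * c (n + m * i) := by
  rw [aeval_comp, map_pow, aeval_X, aeval_eq_sum_range]
  simp [← pow_mul, shift_pow_apply]

theorem aeval_shift_apply_eq_zero_of_dvd {c : ℕ → R} {f g : R[X]} {N : ℕ}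
    (hc : ∀ n ≥ N, aeval (shift R) f c n = 0) (hfg : f ∣ g) :
    ∀ n ≥ N, aeval (shift R) g c n = 0 := by
  obtain ⟨u, rfl⟩ := hfg
  intro n hn
  rw [mul_comm, map_mul, Module.End.mul_apply, aeval_shift_apply (Nat.lt_succ_self _)]
  exact Finset.sum_eq_zero fun i _ => by rw [hc (n + i) (by omega), mul_zero]

theorem aeval_shift_reverse_apply_eq_zero {c : ℕ → R} {p q : R[X]}
    (hpq : ∀ n, ∑ k ∈ Finset.range (n + 1), q.coeff k * c (n - k) = p.coeff n) {n : ℕ}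
    (hn : p.natDegree < n + q.natDegree) : aeval (shift R) q.reverse c n = 0 := by
  set d := q.natDegree
  calc aeval (shift R) q.reverse c n
      = ∑ i ∈ Finset.range (d + 1), q.coeff (d - i) * c (n + i) := by
        rw [aeval_shift_apply (q.reverse_natDegree_le.trans_lt (Nat.lt_succ_self d))]
        refine Finset.sum_congr rfl fun i hi => ?_
        rw [coeff_reverse, revAt_le (Nat.lt_succ_iff.1 (Finset.mem_range.1 hi))]
    _ = ∑ k ∈ Finset.range (d + 1), q.coeff k * c (n + d - k) := by
        rw [← Finset.sum_range_reflect]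
        refine Finset.sum_congr rfl fun k hk => ?_
        have := Finset.mem_range.1 hk
        congr 3 <;> omega
    _ = ∑ k ∈ Finset.range (n + d + 1), q.coeff k * c (n + d - k) := by
        refine Finset.sum_subset (Finset.range_subset_range.2 (by omega)) fun k _ hk => ?_
        rw [coeff_eq_zero_of_natDegree_lt (by simpa using hk), zero_mul]
    _ = 0 := by rw [hpq, coeff_eq_zero_of_natDegree_lt hn]

theorem apply_add_mul_eq_zero_of_dvd {R : Type*} [CommRing R] {c : ℕ → R} {P h : R[X]}
    {N m g n₀ : ℕ} (hc : ∀ n ≥ N, aeval (shift R) P c n = 0) (hP : P ∣ X ^ g - h.comp (X ^ m))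
    (hn₀ : N ≤ n₀) (hvan : ∀ j, c (n₀ + m * j) = 0) (t : ℕ) : c (n₀ + g * t) = 0 := by
  have hdvd : P ∣ X ^ (g * t) - (h ^ t).comp (X ^ m) := by
    rw [pow_mul, pow_comp]
    exact hP.trans (sub_dvd_pow_sub_pow _ _ t)
  have := aeval_shift_apply_eq_zero_of_dvd hc hdvd n₀ hn₀
  rw [map_sub, LinearMap.sub_apply, Pi.sub_apply, map_pow, aeval_X, shift_pow_apply,
    aeval_shift_comp_X_pow_apply] at this
  simpa [hvan] using this

end Shift

theorem eventually_of_forall_mod_eq {P : ℕ → Prop} {D : ℕ} (hD : 0 < D)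
    (h : ∀ v < D, ∀ᶠ n in atTop, n % D = v → P n) : ∀ᶠ n in atTop, P n := by
  filter_upwards [(Finset.range D).eventually_all.2 fun v hv => h v (Finset.mem_range.1 hv)]
    with n hn using hn _ (Finset.mem_range.2 (Nat.mod_lt _ hD)) rfl

theorem eventually_apply_eq_zero_of_dvd_add {K : Type*} [Field K] [IsAlgClosed K] [CharZero K]
    {c : ℕ → K} {P : K[X]} {N D s m : ℕ} (hP : P.coeff 0 ≠ 0)
    (hc : ∀ n ≥ N, aeval (shift K) P c n = 0)
    (hD : ∀ a ∈ P.roots, ∀ b ∈ P.roots, IsOfFinOrder (a / b) → (a / b) ^ D = 1)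
    (hm : m ≠ 0) (hs : ∀ n, m ∣ n + s → c n = 0) :
    ∀ᶠ n in atTop, D ∣ n + s → c n = 0 := by
  set g := m.gcd D
  obtain ⟨h, hh⟩ := exists_dvd_X_pow_sub_comp_X_pow hP hm (g := g) fun a ha b hb hab =>
    pow_gcd_eq_one.2 ⟨hab, hD a ha b hb
      (isOfFinOrder_iff_pow_eq_one.2 ⟨m, Nat.pos_of_ne_zero hm, hab⟩)⟩
  set n₀ := m * (N + s) - s
  have hNs : N + s ≤ m * (N + s) := Nat.le_mul_of_pos_left _ (Nat.pos_of_ne_zero hm)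
  have hmn₀ : m ∣ n₀ + s := ⟨N + s, by omega⟩
  filter_upwards [eventually_ge_atTop n₀] with n hn hDn
  obtain ⟨t, ht⟩ : g ∣ n - n₀ := by
    have := Nat.dvd_sub ((Nat.gcd_dvd_right m D).trans hDn) ((Nat.gcd_dvd_left m D).trans hmn₀)
    rwa [show n + s - (n₀ + s) = n - n₀ by omega] at this
  rw [show n = n₀ + g * t by omega]
  refine apply_add_mul_eq_zero_of_dvd hc hh (by omega) (fun j => hs _ ?_) t
  rw [add_right_comm]
  exact dvd_add hmn₀ (dvd_mul_right m j)

/-- Let `c : ℕ → ℂ` be the Taylor coefficient sequence at `0` of a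
rational function `p / q` with `q(0) ≠ 0` (i.e. `q · ∑ c_n z^n = p` as formal
power series). If the spectrum `{n : c n ≠ 0}` is contained in a set
`Λ ⊆ ℕ` such that for all sufficiently large `s` there is `m ≥ 1` with
`Λ ∩ {n ≡ -s (mod m)} = ∅`, then the rational function is a polynomial, i.e.
`c n = 0` for all large `n`. -/
theorem stmt_6 (c : ℕ → ℂ) (p q : Polynomial ℂ) (hq0 : q.eval 0 ≠ 0)
    (hrat : ∀ n : ℕ, ∑ k ∈ Finset.range (n + 1), q.coeff k * c (n - k) = p.coeff n)
    (Λ : Set ℕ) (hspec : {n : ℕ | c n ≠ 0} ⊆ Λ)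
    (hR : ∃ S : ℕ, ∀ s : ℕ, S ≤ s → 0 < s →
      ∃ m : ℕ, 0 < m ∧ ∀ n ∈ Λ, ¬ ((n : ℤ) ≡ -(s : ℤ) [ZMOD (m : ℤ)])) :
    ∀ᶠ n in atTop, c n = 0 := by
  obtain ⟨S, hS⟩ := hR
  have hP : q.reverse.coeff 0 ≠ 0 := by
    rw [coeff_zero_reverse, leadingCoeff_ne_zero]
    rintro rfl
    simp at hq0
  have hc : ∀ n ≥ p.natDegree + 1, aeval (shift ℂ) q.reverse c n = 0 :=
    fun n hn => aeval_shift_reverse_apply_eq_zero hrat (by omega)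
  obtain ⟨D, hD0, hD⟩ := ((q.reverse.roots.toFinset ×ˢ q.reverse.roots.toFinset).image
    fun x => x.1 / x.2).exists_pos_forall_pow_eq_one
  refine eventually_of_forall_mod_eq hD0 fun v hv => ?_
  set s := D * S + (D - v)
  obtain ⟨m, hm, hΛ⟩ := hS s (by have := Nat.le_mul_of_pos_left S hD0; omega) (by omega)
  have hvan : ∀ n, m ∣ n + s → c n = 0 := fun n hn => by_contra fun hcn =>
    hΛ n (hspec hcn) <| Int.modEq_iff_dvd.2 <| by
      rw [show -(s : ℤ) - n = -((n + s : ℕ) : ℤ) by push_cast; ring]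
      exact dvd_neg.2 (Int.natCast_dvd_natCast.2 hn)
  have hroots : ∀ a ∈ q.reverse.roots, ∀ b ∈ q.reverse.roots,
      IsOfFinOrder (a / b) → (a / b) ^ D = 1 := fun a ha b hb =>
    hD _ (Finset.mem_image.2 ⟨(a, b), Finset.mem_product.2
      ⟨Multiset.mem_toFinset.2 ha, Multiset.mem_toFinset.2 hb⟩, rfl⟩)
  filter_upwards [eventually_apply_eq_zero_of_dvd_add hP hc hroots hm.ne' hvan] with n hn hnv
  refine hn ⟨n / D + S + 1, ?_⟩
  have := Nat.div_add_mod n D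
  rw [mul_add_one, mul_add]
  omega
end
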